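/- Let K ∈ 𝒦 with associated eigenvalue sequence λ(h) = Λ_{j(h)} for h ∈ ℋ. Then for every pair x ≠ y in ℝ⁺, the series Σ_{h∈ℋ} λ(h) h(x) h(y) converges absolutely and K(x,y) = Σ_{h∈ℋ} λ(h) h(x) h(y). -/

import Mathlib

open MeasureTheory Set Filter
open scoped ENNReal

/-- The dyadic distance on ℝ⁺: the infimum of the lengths of the dyadic
intervals `[k·2^{-j}, (k+1)·2^{-j})` containing both points (and `0` on the diagonal). -/
noncomputable def dyadicDist (x y : ℝ) : ℝ :=
  if x = y then 0
  else sInf {r : ℝ | ∃ (j : ℤ) (k : ℕ), r = (2:ℝ) ^ (-j) ∧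
    x ∈ Set.Ico ((k : ℝ) * (2:ℝ) ^ (-j)) (((k : ℝ) + 1) * (2:ℝ) ^ (-j)) ∧
    y ∈ Set.Ico ((k : ℝ) * (2:ℝ) ^ (-j)) (((k : ℝ) + 1) * (2:ℝ) ^ (-j))}

/-- The sequence `α_l = 2^{-l}(k_{-l} - k_{-l+1})` associated to the level values `k` of a
kernel in `𝒦`. -/
noncomputable def alphaOf (k : ℤ → ℝ) (l : ℤ) : ℝ :=
  (2:ℝ) ^ (-l) * (k (-l) - k (-l + 1))

/-- The profile `φ(s) = Σ_{l∈ℤ} α_l 2^l χ_{(0,2^{-l}]}(s)` associated to the level values `k`. -/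
noncomputable def phiOf (k : ℤ → ℝ) (s : ℝ) : ℝ :=
  ∑' l : ℤ, alphaOf k l * ((2:ℝ) ^ l * (if s ∈ Set.Ioc (0:ℝ) ((2:ℝ) ^ (-l)) then 1 else 0))

/-- The sequence `Λ_j = Σ_{l>j} α_l` associated to the level values `k`. -/
noncomputable def LambdaOf (k : ℤ → ℝ) (j : ℤ) : ℝ :=
  ∑' m : ℕ, alphaOf k (j + 1 + m)

/-- The Haar function `h^j_k(x) = 2^{j/2}(χ_{[0,1/2)} - χ_{[1/2,1)})(2^j x - k)`,
supported in the dyadic interval `I^j_k = [k·2^{-j},(k+1)·2^{-j})`. -/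
noncomputable def haarFn (j : ℤ) (k : ℕ) (x : ℝ) : ℝ :=
  (2:ℝ) ^ ((j : ℝ) / 2) *
    (if (2:ℝ) ^ j * x - (k : ℝ) ∈ Set.Ico (0:ℝ) (1/2) then 1
     else if (2:ℝ) ^ j * x - (k : ℝ) ∈ Set.Ico (1/2 : ℝ) 1 then -1 else 0)

/-!
Only the Haar functions of the dyadic intervals containing both `x` and `y` contribute. If `j₀`
is the last level at which `x` and `y` lie in a common dyadic interval, then
`h(x) h(y) = 2^j` at the levels `j < j₀` and `h(x) h(y) = -2^{j₀}` at level `j₀`.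
Integrability of `K(x₀, ·)` makes `w_l = 2^{-l} k_{-l}` summable, and
`2^j Λ_j = F(j + 1) - F(j)` for `F(J) = 2^{J-1} Σ_{l ≥ J} w_l`, which tends to `0` as
`J → -∞`. Hence the series telescopes to `F(j₀) - 2^{j₀} Λ_{j₀} = 2^{j₀} w_{j₀} = k_{-j₀}`,
which is `K(x, y)` because `δ(x, y) = 2^{-j₀}`.
-/

open Topology

noncomputable def dyadicIndex (j : ℤ) (x : ℝ) : ℕ := ⌊(2:ℝ) ^ j * x⌋₊

def dyadicInterval (j : ℤ) (n : ℕ) : Set ℝ :=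
  Ico ((n : ℝ) * (2:ℝ) ^ (-j)) (((n : ℝ) + 1) * (2:ℝ) ^ (-j))

lemma mem_dyadicInterval_iff {x : ℝ} (hx : 0 ≤ x) (j : ℤ) (n : ℕ) :
    x ∈ dyadicInterval j n ↔ dyadicIndex j x = n := by
  have h2 : (0:ℝ) < 2 ^ j := by positivity
  rw [dyadicIndex, Nat.floor_eq_iff (by positivity), dyadicInterval, mem_Ico, zpow_neg,
    ← div_eq_mul_inv, ← div_eq_mul_inv, div_le_iff₀ h2, lt_div_iff₀ h2, mul_comm x]

lemma dyadicIndex_sub_natCast (j : ℤ) (n : ℕ) (x : ℝ) :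
    dyadicIndex (j - n) x = dyadicIndex j x / 2 ^ n := by
  have h : (2:ℝ) ^ (j - n) * x = (2:ℝ) ^ j * x / ((2 ^ n : ℕ) : ℝ) := by
    rw [zpow_sub₀ two_ne_zero, zpow_natCast]; push_cast; ring
  rw [dyadicIndex, h, Nat.floor_div_natCast, dyadicIndex]

lemma dyadicIndex_eq_div_two (j : ℤ) (x : ℝ) :
    dyadicIndex j x = dyadicIndex (j + 1) x / 2 := by
  simpa using dyadicIndex_sub_natCast (j + 1) 1 x

lemma dyadicIndex_eq_of_le {x y : ℝ} {i j : ℤ} (hij : i ≤ j)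
    (h : dyadicIndex j x = dyadicIndex j y) : dyadicIndex i x = dyadicIndex i y := by
  obtain ⟨n, rfl⟩ : ∃ n : ℕ, i = j - n := ⟨(j - i).toNat, by omega⟩
  rw [dyadicIndex_sub_natCast, dyadicIndex_sub_natCast, h]

lemma zpow_mul_abs_sub_lt_one {x y : ℝ} (hx : 0 ≤ x) (hy : 0 ≤ y) {j : ℤ}
    (h : dyadicIndex j x = dyadicIndex j y) : (2:ℝ) ^ j * |x - y| < 1 := by
  have hx' : (0:ℝ) ≤ 2 ^ j * x := by positivity
  have hy' : (0:ℝ) ≤ 2 ^ j * y := by positivity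
  have := Nat.floor_le hx'; have := Nat.lt_floor_add_one ((2:ℝ) ^ j * x)
  have := Nat.floor_le hy'; have := Nat.lt_floor_add_one ((2:ℝ) ^ j * y)
  rw [dyadicIndex, dyadicIndex] at h
  rw [← abs_of_pos (show (0:ℝ) < 2 ^ j by positivity), ← abs_mul, mul_sub, abs_sub_lt_iff]
  rw [h] at *
  constructor <;> linarith

lemma exists_splitting_level {x y : ℝ} (hx : 0 ≤ x) (hy : 0 ≤ y) (hxy : x ≠ y) :
    ∃ j : ℤ, dyadicIndex j x = dyadicIndex j y ∧ dyadicIndex (j + 1) x ≠ dyadicIndex (j + 1) y := by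
  have hpos : 0 < |x - y| := abs_pos.2 (sub_ne_zero.2 hxy)
  obtain ⟨n, hn⟩ := pow_unbounded_of_one_lt (|x - y|⁻¹) one_lt_two
  obtain ⟨m, hm⟩ := pow_unbounded_of_one_lt (max x y) one_lt_two
  have hbdd : ∀ j, dyadicIndex j x = dyadicIndex j y → j ≤ n := by
    intro j hj
    have h1 : (2:ℝ) ^ j * |x - y| < 2 ^ (n : ℤ) * |x - y| := by
      calc (2:ℝ) ^ j * |x - y| < 1 := zpow_mul_abs_sub_lt_one hx hy hj
        _ = |x - y|⁻¹ * |x - y| := (inv_mul_cancel₀ hpos.ne').symm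
        _ < 2 ^ (n : ℤ) * |x - y| := by rw [zpow_natCast]; gcongr
    exact ((zpow_lt_zpow_iff_right₀ one_lt_two).1 (lt_of_mul_lt_mul_right h1 hpos.le)).le
  have hbot : dyadicIndex (-m) x = dyadicIndex (-m) y := by
    have hsmall : ∀ z, z ≤ max x y → (2:ℝ) ^ (-(m : ℤ)) * z < 1 := fun z hz => by
      rw [zpow_neg, zpow_natCast, inv_mul_lt_iff₀ (by positivity), mul_one]
      exact hz.trans_lt hm
    rw [dyadicIndex, dyadicIndex, Nat.floor_eq_zero.2 (hsmall x (le_max_left x y)),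
      Nat.floor_eq_zero.2 (hsmall y (le_max_right x y))]
  obtain ⟨j, hj, hmax⟩ := Int.exists_greatest_of_bdd ⟨n, hbdd⟩ ⟨_, hbot⟩
  exact ⟨j, hj, fun h => by linarith [hmax _ h]⟩

lemma dyadicDist_eq_of_splitting_level {x y : ℝ} (hx : 0 ≤ x) (hy : 0 ≤ y) {j : ℤ}
    (hsame : dyadicIndex j x = dyadicIndex j y)
    (hdiff : dyadicIndex (j + 1) x ≠ dyadicIndex (j + 1) y) :
    dyadicDist x y = (2:ℝ) ^ (-j) := by
  have hxy : x ≠ y := by rintro rfl; exact hdiff rfl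
  rw [dyadicDist, if_neg hxy]
  refine IsLeast.csInf_eq ⟨⟨j, dyadicIndex j x, rfl, (mem_dyadicInterval_iff hx j _).2 rfl,
    (mem_dyadicInterval_iff hy j _).2 hsame.symm⟩, ?_⟩
  rintro r ⟨i, n, rfl, hxi, hyi⟩
  have hi : i ≤ j := by
    by_contra! hji
    refine hdiff (dyadicIndex_eq_of_le hji ?_)
    rw [(mem_dyadicInterval_iff hx i n).1 hxi, (mem_dyadicInterval_iff hy i n).1 hyi]
  exact zpow_le_zpow_right₀ one_le_two (neg_le_neg hi)

lemma haarFn_eq_zero_of_ne {x : ℝ} (hx : 0 ≤ x) {j : ℤ} {n : ℕ} (h : dyadicIndex j x ≠ n) :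
    haarFn j n x = 0 := by
  have hnot : ¬ ((n : ℝ) ≤ 2 ^ j * x ∧ 2 ^ j * x < n + 1) := fun hc =>
    h ((Nat.floor_eq_iff (by positivity)).2 hc)
  rw [haarFn]
  split_ifs with h1 h2
  · exact absurd ⟨by linarith [h1.1], by linarith [h1.2]⟩ hnot
  · exact absurd ⟨by linarith [h2.1], by linarith [h2.2]⟩ hnot
  · rw [mul_zero]

lemma haarFn_dyadicIndex {x : ℝ} (hx : 0 ≤ x) (j : ℤ) :
    haarFn j (dyadicIndex j x) x = (2:ℝ) ^ ((j : ℝ) / 2) * (-1) ^ dyadicIndex (j + 1) x := by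
  set t := (2:ℝ) ^ j * x
  have ht : 0 ≤ t := by positivity
  have h2t : (2:ℝ) ^ (j + 1) * x = 2 * t := by rw [zpow_add_one₀ two_ne_zero]; ring
  have hd : (dyadicIndex j x : ℝ) ≤ t ∧ t < dyadicIndex j x + 1 :=
    ⟨Nat.floor_le ht, Nat.lt_floor_add_one t⟩
  have hd' : (dyadicIndex (j + 1) x : ℝ) ≤ 2 * t ∧ 2 * t < dyadicIndex (j + 1) x + 1 := by
    rw [← h2t]; exact ⟨Nat.floor_le (by positivity), Nat.lt_floor_add_one _⟩
  have hdiv := dyadicIndex_eq_div_two j x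
  rcases Nat.even_or_odd (dyadicIndex (j + 1) x) with he | ho
  · have h : dyadicIndex (j + 1) x = 2 * dyadicIndex j x := by
      obtain ⟨r, hr⟩ := he; omega
    rw [h] at hd'; push_cast at hd'
    rw [haarFn, if_pos ⟨by linarith, by linarith⟩, he.neg_one_pow]
  · have h : dyadicIndex (j + 1) x = 2 * dyadicIndex j x + 1 := by
      obtain ⟨r, hr⟩ := ho; omega
    rw [h] at hd'; push_cast at hd'
    rw [haarFn, if_neg (fun hc => by linarith [hc.2]), if_pos ⟨by linarith, by linarith⟩,
      ho.neg_one_pow]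

lemma haarFn_mul_haarFn {x y : ℝ} (hx : 0 ≤ x) (hy : 0 ≤ y) {j : ℤ}
    (h : dyadicIndex j x = dyadicIndex j y) :
    haarFn j (dyadicIndex j x) x * haarFn j (dyadicIndex j x) y =
      (2:ℝ) ^ j * (-1) ^ (dyadicIndex (j + 1) x + dyadicIndex (j + 1) y) := by
  have hsq : (2:ℝ) ^ ((j : ℝ) / 2) * 2 ^ ((j : ℝ) / 2) = 2 ^ j := by
    rw [← Real.rpow_add two_pos, add_halves, Real.rpow_intCast]
  rw [haarFn_dyadicIndex hx, h, haarFn_dyadicIndex hy, pow_add, ← hsq]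
  ring

lemma haarFn_mul_haarFn_of_le {x y : ℝ} (hx : 0 ≤ x) (hy : 0 ≤ y) {j₀ j : ℤ} (hj : j ≤ j₀)
    (hsame : dyadicIndex j₀ x = dyadicIndex j₀ y)
    (hdiff : dyadicIndex (j₀ + 1) x ≠ dyadicIndex (j₀ + 1) y) :
    haarFn j (dyadicIndex j x) x * haarFn j (dyadicIndex j x) y =
      (if j = j₀ then -1 else 1) * (2:ℝ) ^ j := by
  rw [haarFn_mul_haarFn hx hy (dyadicIndex_eq_of_le hj hsame)]
  split_ifs with hj₀
  · subst hj₀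
    have hodd : Odd (dyadicIndex (j + 1) x + dyadicIndex (j + 1) y) := by
      have := dyadicIndex_eq_div_two j x; have := dyadicIndex_eq_div_two j y
      rw [Nat.odd_iff]; omega
    rw [hodd.neg_one_pow]; ring
  · have hsucc := dyadicIndex_eq_of_le (show j + 1 ≤ j₀ by omega) hsame
    rw [hsucc, ← two_mul, (even_two_mul _).neg_one_pow]; ring

lemma haarFn_mul_haarFn_eq_zero_of_lt {x y : ℝ} (hx : 0 ≤ x) (hy : 0 ≤ y) {j₀ j : ℤ}
    (hj : j₀ < j) (hdiff : dyadicIndex (j₀ + 1) x ≠ dyadicIndex (j₀ + 1) y) (n : ℕ) :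
    haarFn j n x * haarFn j n y = 0 := by
  by_cases hn : dyadicIndex j x = n
  · have hyn : dyadicIndex j y ≠ n := fun h => hdiff (dyadicIndex_eq_of_le hj (hn.trans h.symm))
    rw [haarFn_eq_zero_of_ne hy hyn, mul_zero]
  · rw [haarFn_eq_zero_of_ne hx hn, zero_mul]

lemma two_zpow_sub_natCast (j : ℤ) (n : ℕ) : (2:ℝ) ^ (j - n) = 2 ^ j * (1 / 2) ^ n := by
  rw [zpow_sub₀ two_ne_zero, zpow_natCast, one_div_pow, div_eq_mul_one_div]

noncomputable def tailSum (a : ℤ → ℝ) (J : ℤ) : ℝ := ∑' n : ℕ, a (J + n)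

section tailSum

variable {a : ℤ → ℝ} (ha : Summable a)
include ha

lemma Summable.comp_add_natCast (J : ℤ) : Summable (fun n : ℕ => a (J + n)) :=
  ha.comp_injective fun m n h => by simpa using h

lemma tailSum_eq_add (J : ℤ) : tailSum a J = a J + tailSum a (J + 1) := by
  rw [tailSum, (ha.comp_add_natCast J).tsum_eq_zero_add, tailSum, Nat.cast_zero, add_zero]
  congr 1
  exact tsum_congr fun n => by push_cast; ring_nf

lemma abs_tailSum_le (J : ℤ) : |tailSum a J| ≤ ∑' l, |a l| := by
  have hs : Summable (fun n : ℕ => |a (J + n)|) := ha.abs.comp_add_natCast J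
  calc |tailSum a J| ≤ ∑' n : ℕ, |a (J + n)| := by
        rw [← Real.norm_eq_abs]; exact norm_tsum_le_tsum_norm hs
    _ ≤ ∑' l, |a l| := hs.tsum_le_tsum_of_inj (fun n : ℕ => J + n)
        (fun m n h => by simpa using h) (fun _ _ => abs_nonneg _) (fun _ => le_rfl) ha.abs

lemma tendsto_zpow_mul_tailSum (J : ℤ) :
    Tendsto (fun N : ℕ => (2:ℝ) ^ (J - N) * tailSum a (J - N)) atTop (𝓝 0) := by
  have hlim : Tendsto (fun N : ℕ => 2 ^ J * (∑' l, |a l|) * (1 / 2 : ℝ) ^ N) atTop (𝓝 0) := by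
    simpa using (tendsto_pow_atTop_nhds_zero_of_lt_one (by norm_num : (0:ℝ) ≤ 1 / 2)
      (by norm_num)).const_mul (2 ^ J * ∑' l, |a l|)
  refine squeeze_zero_norm (fun N => ?_) hlim
  rw [norm_mul, Real.norm_eq_abs, Real.norm_eq_abs, abs_of_pos (by positivity),
    two_zpow_sub_natCast, mul_right_comm]
  gcongr
  exact abs_tailSum_le ha _

end tailSum

noncomputable def levelWeight (k : ℤ → ℝ) (l : ℤ) : ℝ := (2:ℝ) ^ (-l) * k (-l)

lemma zpow_mul_levelWeight (k : ℤ → ℝ) (j : ℤ) : (2:ℝ) ^ j * levelWeight k j = k (-j) := by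
  rw [levelWeight, ← mul_assoc, ← zpow_add₀ two_ne_zero, add_neg_cancel, zpow_zero, one_mul]

lemma alphaOf_eq_levelWeight (k : ℤ → ℝ) (l : ℤ) :
    alphaOf k l = levelWeight k l - levelWeight k (l - 1) / 2 := by
  rw [alphaOf, levelWeight, levelWeight, show -(l - 1) = -l + 1 by ring,
    zpow_add_one₀ two_ne_zero]
  ring

section LambdaOf

variable {k : ℤ → ℝ} (hw : Summable (levelWeight k))
include hw

lemma LambdaOf_eq_tailSum (j : ℤ) :
    LambdaOf k j = tailSum (levelWeight k) (j + 1) - tailSum (levelWeight k) j / 2 := by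
  rw [LambdaOf, tailSum, tailSum, ← tsum_div_const,
    ← Summable.tsum_sub (hw.comp_add_natCast (j + 1)) ((hw.comp_add_natCast j).div_const 2)]
  exact tsum_congr fun n => by rw [alphaOf_eq_levelWeight, show j + 1 + n - 1 = j + n by ring]

lemma zpow_mul_LambdaOf (j : ℤ) :
    (2:ℝ) ^ j * LambdaOf k j =
      2 ^ (j + 1 - 1) * tailSum (levelWeight k) (j + 1) - 2 ^ (j - 1) * tailSum (levelWeight k) j := by
  rw [LambdaOf_eq_tailSum hw, add_sub_cancel_right, zpow_sub_one₀ two_ne_zero]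
  ring

lemma abs_LambdaOf_le (j : ℤ) : |LambdaOf k j| ≤ 2 * ∑' l, |levelWeight k l| := by
  have h1 := abs_tailSum_le hw (j + 1)
  have h2 := abs_tailSum_le hw j
  rw [LambdaOf_eq_tailSum hw]
  calc _ ≤ |tailSum (levelWeight k) (j + 1)| + |tailSum (levelWeight k) j / 2| := abs_sub _ _
    _ ≤ _ := by rw [abs_div, abs_two]; linarith [abs_nonneg (tailSum (levelWeight k) j)]

lemma summable_abs_signed_zpow_mul_LambdaOf (j₀ : ℤ) :
    Summable (fun n : ℕ =>
      |LambdaOf k (j₀ - n) * ((if (j₀ - n : ℤ) = j₀ then -1 else 1) * (2:ℝ) ^ (j₀ - n))|) := by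
  refine Summable.of_nonneg_of_le (fun _ => abs_nonneg _) (fun n => ?_)
    (summable_geometric_two.mul_left (2 * (∑' l, |levelWeight k l|) * 2 ^ j₀))
  have hsign : |(if (j₀ - n : ℤ) = j₀ then -1 else 1 : ℝ)| = 1 := by split_ifs <;> simp
  calc _ = |LambdaOf k (j₀ - n)| * (2 ^ j₀ * (1 / 2) ^ n) := by
        rw [abs_mul, abs_mul, hsign, one_mul, abs_of_pos (zpow_pos (two_pos : (0:ℝ) < 2) (j₀ - n)),
          two_zpow_sub_natCast]
    _ ≤ 2 * (∑' l, |levelWeight k l|) * (2 ^ j₀ * (1 / 2) ^ n) := by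
        gcongr; exact abs_LambdaOf_le hw _
    _ = _ := by ring

lemma hasSum_signed_zpow_mul_LambdaOf (j₀ : ℤ) :
    HasSum (fun n : ℕ =>
      LambdaOf k (j₀ - n) * ((if (j₀ - n : ℤ) = j₀ then -1 else 1) * (2:ℝ) ^ (j₀ - n)))
      (k (-j₀)) := by
  set g := fun n : ℕ =>
    LambdaOf k (j₀ - n) * ((if (j₀ - n : ℤ) = j₀ then -1 else 1) * (2:ℝ) ^ (j₀ - n))
  set R := tailSum (levelWeight k)
  set F : ℤ → ℝ := fun J => 2 ^ (J - 1) * R J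
  have hsucc : ∀ n : ℕ, g (n + 1) = F (j₀ - n) - F (j₀ - (n + 1 : ℕ)) := fun n => by
    have hj : j₀ - (n + 1 : ℕ) + 1 = j₀ - n := by push_cast; ring
    simp only [g]
    rw [if_neg (by omega), one_mul, mul_comm, zpow_mul_LambdaOf hw, hj]
  have hF : Tendsto (fun N : ℕ => F (j₀ - N)) atTop (𝓝 0) := by
    convert (tendsto_zpow_mul_tailSum hw j₀).div_const 2 using 1
    · funext N
      simp only [F, zpow_sub_one₀ (two_ne_zero : (2:ℝ) ≠ 0)]
      ring
    · rw [zero_div]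
  have htail : HasSum (fun n : ℕ => g (n + 1)) (F j₀) := by
    have hsummable : Summable (fun n : ℕ => g (n + 1)) :=
      (summable_nat_add_iff 1).2 (summable_abs_signed_zpow_mul_LambdaOf hw j₀).of_abs
    refine hsummable.hasSum_iff_tendsto_nat.2 ?_
    simp_rw [hsucc, Finset.sum_range_sub' (fun n : ℕ => F (j₀ - n)), Nat.cast_zero, sub_zero]
    simpa using hF.const_sub (F j₀)
  have hvalue : k (-j₀) - ∑ i ∈ Finset.range 1, g i = F j₀ := by
    have h1 := zpow_mul_LambdaOf hw j₀
    have h2 := tailSum_eq_add hw j₀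
    have h3 := zpow_mul_levelWeight k j₀
    have h4 : (2:ℝ) ^ j₀ = 2 * 2 ^ (j₀ - 1) := by
      rw [zpow_sub_one₀ (two_ne_zero : (2:ℝ) ≠ 0)]; ring
    rw [add_sub_cancel_right] at h1
    simp only [Finset.range_one, Finset.sum_singleton, g, F, Nat.cast_zero, sub_zero, if_pos]
    linear_combination h1 - h3 - 2 ^ j₀ * h2 + R j₀ * h4
  exact (hasSum_nat_add_iff' 1).1 (hvalue ▸ htail)

end LambdaOf

lemma volume_real_dyadicInterval (j : ℤ) (n : ℕ) :
    volume.real (dyadicInterval j n) = (2:ℝ) ^ (-j) := by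
  rw [dyadicInterval, Real.volume_real_Ico, add_one_mul, add_sub_cancel_left,
    max_eq_left (by positivity)]

/-- The half of the level-`j` dyadic interval containing `x` that does not contain `x`. -/
noncomputable def siblingInterval (j : ℤ) (x : ℝ) : Set ℝ :=
  dyadicInterval (j + 1) (2 * dyadicIndex j x + (1 - dyadicIndex (j + 1) x % 2))

lemma dyadicDist_of_mem_siblingInterval {x y : ℝ} (hx : 0 ≤ x) {j : ℤ}
    (hy : y ∈ siblingInterval j x) : 0 ≤ y ∧ dyadicDist x y = (2:ℝ) ^ (-j) := by
  have hy₀ : 0 ≤ y := le_trans (by positivity) hy.1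
  have hidx := (mem_dyadicInterval_iff hy₀ _ _).1 hy
  have hx' := dyadicIndex_eq_div_two j x
  have hy' := dyadicIndex_eq_div_two j y
  exact ⟨hy₀, dyadicDist_eq_of_splitting_level hx hy₀ (by omega) (by omega)⟩

/-- The sibling intervals of `x₀` at the various levels are disjoint sets of measure `2^{-j-1}`
on which `K x₀` takes the value `k_{-j}`, so integrability of `K x₀` forces
`Σ_j 2^{-j} k_{-j} < ∞`. -/
lemma summable_levelWeight {K : ℝ → ℝ → ℝ} {k : ℤ → ℝ} {x₀ : ℝ} (hx₀ : 0 ≤ x₀)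
    (hint : IntegrableOn (K x₀) (Ici 0))
    (hk : ∀ (j : ℤ) (y : ℝ), 0 ≤ y → dyadicDist x₀ y = (2:ℝ) ^ j → K x₀ y = k j) :
    Summable (levelWeight k) := by
  have hmem : ∀ j, ∀ y ∈ siblingInterval j x₀, 0 ≤ y ∧ dyadicDist x₀ y = (2:ℝ) ^ (-j) :=
    fun j y hy => dyadicDist_of_mem_siblingInterval hx₀ hy
  have hdisj : Pairwise (Function.onFun Disjoint fun j => siblingInterval j x₀) := by
    intro i j hij
    refine Set.disjoint_left.2 fun y hyi hyj => hij ?_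
    have h := (hmem i y hyi).2.symm.trans (hmem j y hyj).2
    exact neg_injective (zpow_right_injective₀ two_pos (by norm_num) h)
  have hsub : (⋃ j, siblingInterval j x₀) ⊆ Ici 0 :=
    Set.iUnion_subset fun j y hy => (hmem j y hy).1
  have hmeas : ∀ j, MeasurableSet (siblingInterval j x₀) := fun j => measurableSet_Ico
  have hsum := hasSum_integral_iUnion hmeas hdisj (hint.mono_set hsub)
  have hpiece : ∀ j, ∫ y in siblingInterval j x₀, K x₀ y = levelWeight k j / 2 := by
    intro j
    rw [setIntegral_congr_fun (hmeas j) fun y hy => hk (-j) y (hmem j y hy).1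
      (hmem j y hy).2, setIntegral_const, siblingInterval, volume_real_dyadicInterval,
      levelWeight, smul_eq_mul, neg_add, zpow_add₀ two_ne_zero]
    ring
  simp only [hpiece] at hsum
  exact (summable_div_const_iff two_ne_zero).1 hsum.summable

theorem kernel_haar_representation_general (K : ℝ → ℝ → ℝ) (k : ℤ → ℝ)
    (x₀ : ℝ) (hx₀ : 0 ≤ x₀)
    (hKnorm : (∫ y in Set.Ici (0:ℝ), K x₀ y) = 1)
    (hk : ∀ (j : ℤ) (x y : ℝ), 0 ≤ x → 0 ≤ y → dyadicDist x y = (2:ℝ) ^ j → K x y = k j)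
    (x y : ℝ) (hx : 0 ≤ x) (hy : 0 ≤ y) (hxy : x ≠ y) :
    Summable (fun p : ℤ × ℕ => |LambdaOf k p.1 * haarFn p.1 p.2 x * haarFn p.1 p.2 y|) ∧
      K x y = ∑' p : ℤ × ℕ, LambdaOf k p.1 * haarFn p.1 p.2 x * haarFn p.1 p.2 y := by
  obtain ⟨j₀, hsame, hdiff⟩ := exists_splitting_level hx hy hxy
  have hw : Summable (levelWeight k) :=
    summable_levelWeight hx₀ (Integrable.of_integral_ne_zero (hKnorm ▸ one_ne_zero))
      fun j y hy => hk j x₀ y hx₀ hy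
  set f : ℤ × ℕ → ℝ := fun p => LambdaOf k p.1 * haarFn p.1 p.2 x * haarFn p.1 p.2 y
  set e : ℕ → ℤ × ℕ := fun n => (j₀ - n, dyadicIndex (j₀ - n) x)
  have he : Function.Injective e := fun m n h => by simpa [e] using congrArg Prod.fst h
  have hsupp : ∀ p ∉ Set.range e, f p = 0 := by
    rintro ⟨j, n⟩ hp
    rcases le_or_gt j j₀ with hj | hj
    · have hj' : j₀ - ((j₀ - j).toNat : ℤ) = j := by omega
      have hn : dyadicIndex j x ≠ n := fun hn => hp ⟨(j₀ - j).toNat, by simp only [e, hj', hn]⟩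
      simp only [f, haarFn_eq_zero_of_ne hx hn, mul_zero, zero_mul]
    · simp only [f, mul_assoc, haarFn_mul_haarFn_eq_zero_of_lt hx hy hj hdiff, mul_zero]
  have hfe : ∀ n : ℕ, f (e n) =
      LambdaOf k (j₀ - n) * ((if (j₀ - n : ℤ) = j₀ then -1 else 1) * (2:ℝ) ^ (j₀ - n)) :=
    fun n => by
      simp only [f, e, mul_assoc]
      rw [haarFn_mul_haarFn_of_le hx hy (by omega) hsame hdiff]
  rw [hk (-j₀) x y hx hy (dyadicDist_eq_of_splitting_level hx hy hsame hdiff)]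
  refine ⟨(he.summable_iff fun p hp => (congrArg abs (hsupp p hp)).trans abs_zero).1 ?_,
    ((he.hasSum_iff hsupp).1 ?_).tsum_eq.symm⟩
  · simpa only [Function.comp_def, hfe] using summable_abs_signed_zpow_mul_LambdaOf hw j₀
  · simpa only [Function.comp_def, hfe] using hasSum_signed_zpow_mul_LambdaOf hw j₀

/-- Corollary 1: for `K ∈ 𝒦` with eigenvalues `λ(h) = Λ_{j(h)}`, the Haar series
`Σ_{h∈ℋ} λ(h) h(x) h(y)` converges absolutely and represents `K` at every pair
`x ≠ y` of points of `ℝ⁺`. -/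
theorem kernel_haar_representation (K : ℝ → ℝ → ℝ) (k : ℤ → ℝ)
    (hK0 : ∀ x y : ℝ, 0 ≤ x → 0 ≤ y → 0 ≤ K x y)
    (hKdist : ∀ x y x' y' : ℝ, 0 ≤ x → 0 ≤ y → 0 ≤ x' → 0 ≤ y' →
      dyadicDist x y = dyadicDist x' y' → K x y = K x' y')
    (x₀ : ℝ) (hx₀ : 0 ≤ x₀)
    (hKnorm : (∫ y in Set.Ici (0:ℝ), K x₀ y) = 1)
    (hk : ∀ (j : ℤ) (x y : ℝ), 0 ≤ x → 0 ≤ y → dyadicDist x y = (2:ℝ) ^ j → K x y = k j)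
    (x y : ℝ) (hx : 0 ≤ x) (hy : 0 ≤ y) (hxy : x ≠ y) :
    Summable (fun p : ℤ × ℕ => |LambdaOf k p.1 * haarFn p.1 p.2 x * haarFn p.1 p.2 y|) ∧
      K x y = ∑' p : ℤ × ℕ, LambdaOf k p.1 * haarFn p.1 p.2 x * haarFn p.1 p.2 y :=
  kernel_haar_representation_general K k x₀ hx₀ hKnorm hk x y hx hy hxy
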